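/- For every n≥3 there exist real numbers a and b such that the n×n cycle matrix M_n (diagonal 2, off-diagonal 1's except (n−1,n)-entry b, corner entry a) is positive definite, but the matrix obtained by setting the corner entries a to zero is not positive definite. -/

import Mathlib

/-!
Deleting the last vertex of the cycle leaves the path matrix `T = tridiag(1, 2, 1)` of size
`m = n - 1`, and `M_n` is `T` bordered by the column `v = a e₁ + b e_m` and the corner `2`.
Since `T` is positive definite (by induction, bordering `T` itself), the Schur complement shows
that `M_n` is positive definite iff `vᵀ T⁻¹ v < 2`. The solution of `T w = v` is the restriction
of a sequence `(-1)^k (α + β k)`, which yields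
`vᵀ T⁻¹ v = (m (a² + b²) - 2 (-1)^m a b) / (m + 1)`.
For `b² = 2 (m + 1) / m` this equals `2` when `a = 0`, whereas `a = (-1)^m b / m` lowers it
to `2 (m² - 1) / m² < 2`.
-/

/-- The symmetric matrix supported on the cycle `C_n` with diagonal `2`, off-diagonal
entries `1` except the `(n-1,n)` entry which is `b`, and corner entries `a`. -/
def cycleMatrix (n : ℕ) (a b : ℝ) : Matrix (Fin n) (Fin n) ℝ :=
  Matrix.of fun i j =>
    if i = j then 2
    else if (i : ℕ) + 1 = (j : ℕ) ∨ (j : ℕ) + 1 = (i : ℕ) then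
      (if (i : ℕ) = n - 1 ∨ (j : ℕ) = n - 1 then b else 1)
    else if ((i : ℕ) = 0 ∧ (j : ℕ) = n - 1) ∨ ((j : ℕ) = 0 ∧ (i : ℕ) = n - 1) then a
    else 0

open Matrix

namespace Matrix

theorem posDef_submatrix_equiv {m n R : Type*} [Ring R] [PartialOrder R] [StarRing R]
    {M : Matrix n n R} (e : m ≃ n) : (M.submatrix e e).PosDef ↔ M.PosDef :=
  ⟨fun h => by simpa using h.submatrix e.symm.injective, fun h => h.submatrix e.injective⟩

variable {m n R : Type*} [Fintype m] [Fintype n] [DecidableEq m]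
  [CommRing R] [PartialOrder R] [StarRing R] [StarOrderedRing R]

theorem posDef_fromBlocks₁₁_iff {A : Matrix m m R} (B : Matrix m n R) (D : Matrix n n R)
    (hA : A.PosDef) [Invertible A] :
    (fromBlocks A B Bᴴ D).PosDef ↔ (D - Bᴴ * A⁻¹ * B).PosDef := by
  rw [posDef_iff_dotProduct_mulVec, posDef_iff_dotProduct_mulVec,
    IsHermitian.fromBlocks₁₁ _ _ hA.1]
  refine and_congr_right fun _ => ⟨fun h y hy => ?_, fun h xy hxy => ?_⟩
  · have := h (x := -((A⁻¹ * B) *ᵥ y) ⊕ᵥ y)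
      fun h => hy (funext fun i => by simpa using congrFun h (Sum.inr i))
    rwa [dotProduct_mulVec, schur_complement_eq₁₁ B D _ _ hA.1, neg_add_cancel, dotProduct_zero,
      zero_add, ← dotProduct_mulVec] at this
  · rw [dotProduct_mulVec, ← Sum.elim_comp_inl_inr xy, schur_complement_eq₁₁ B D _ _ hA.1,
      ← dotProduct_mulVec, ← dotProduct_mulVec]
    by_cases hy : xy ∘ Sum.inr = 0
    · have hx : xy ∘ Sum.inl ≠ 0 := fun hx => hxy <| by
        rw [← Sum.elim_comp_inl_inr xy, hx, hy, Sum.elim_zero_zero]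
      simpa [hy] using hA.dotProduct_mulVec_pos hx
    · exact add_pos_of_nonneg_of_pos (hA.posSemidef.dotProduct_mulVec_nonneg _) (h hy)

end Matrix

def borderedMatrix {m : ℕ} (A : Matrix (Fin m) (Fin m) ℝ) (v : Fin m → ℝ) (d : ℝ) :
    Matrix (Fin (m + 1)) (Fin (m + 1)) ℝ :=
  reindex finSumFinEquiv finSumFinEquiv
    (fromBlocks A (replicateCol (Fin 1) v) (replicateRow (Fin 1) v) (of fun _ _ => d))

section borderedMatrix

variable {m : ℕ} (A : Matrix (Fin m) (Fin m) ℝ) (v : Fin m → ℝ) (d : ℝ)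

@[simp] theorem borderedMatrix_castAdd_castAdd (i j : Fin m) :
    borderedMatrix A v d (Fin.castAdd 1 i) (Fin.castAdd 1 j) = A i j := by
  simp [borderedMatrix]

@[simp] theorem borderedMatrix_castAdd_natAdd (i : Fin m) (j : Fin 1) :
    borderedMatrix A v d (Fin.castAdd 1 i) (Fin.natAdd m j) = v i := by
  simp [borderedMatrix]

@[simp] theorem borderedMatrix_natAdd_castAdd (i : Fin 1) (j : Fin m) :
    borderedMatrix A v d (Fin.natAdd m i) (Fin.castAdd 1 j) = v j := by
  simp [borderedMatrix]

@[simp] theorem borderedMatrix_natAdd_natAdd (i j : Fin 1) :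
    borderedMatrix A v d (Fin.natAdd m i) (Fin.natAdd m j) = d := by
  simp [borderedMatrix]

end borderedMatrix

theorem posDef_borderedMatrix_iff {m : ℕ} {A : Matrix (Fin m) (Fin m) ℝ} (hA : A.PosDef)
    {v w : Fin m → ℝ} (hw : A *ᵥ w = v) (d : ℝ) :
    (borderedMatrix A v d).PosDef ↔ v ⬝ᵥ w < d := by
  have := hA.isUnit.invertible
  have hrow : replicateRow (Fin 1) v = (replicateCol (Fin 1) v)ᴴ := by
    rw [conjTranspose_replicateCol, star_trivial]
  have hschur : of (fun _ _ => d) - replicateRow (Fin 1) v * A⁻¹ * replicateCol (Fin 1) v =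
      diagonal fun _ : Fin 1 => d - v ⬝ᵥ w := by
    rw [Matrix.mul_assoc, ← replicateCol_mulVec, inv_mulVec_eq_vec hw.symm,
      replicateRow_mul_replicateCol]
    ext i j
    simp [Fin.fin_one_eq_zero]
  rw [borderedMatrix, reindex_apply, posDef_submatrix_equiv, hrow,
    posDef_fromBlocks₁₁_iff _ _ hA, ← hrow, hschur, posDef_diagonal_iff]
  simp

def pathMatrix (m : ℕ) : Matrix (Fin m) (Fin m) ℝ :=
  Matrix.of fun i j => if i = j then 2 else if (i : ℕ) + 1 = j ∨ (j : ℕ) + 1 = i then 1 else 0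

def borderVec (m : ℕ) (a b : ℝ) : Fin m → ℝ :=
  fun i => (if (i : ℕ) = 0 then a else 0) + (if (i : ℕ) + 1 = m then b else 0)

theorem pathMatrix_apply (m : ℕ) (i j : Fin m) :
    pathMatrix m i j = (if (j : ℕ) = i then 2 else 0) + (if (j : ℕ) = i + 1 then 1 else 0) +
      (if (j : ℕ) + 1 = i then 1 else 0) := by
  simp only [pathMatrix, of_apply, Fin.ext_iff]
  split_ifs <;> first | (exfalso; omega) | ring

theorem pathMatrix_succ (m : ℕ) :
    pathMatrix (m + 1) = borderedMatrix (pathMatrix m) (borderVec m 0 1) 2 := by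
  ext i j
  refine Fin.addCases (fun i => ?_) (fun i => ?_) i <;>
  refine Fin.addCases (fun j => ?_) (fun j => ?_) j <;>
  simp only [borderedMatrix_castAdd_castAdd, borderedMatrix_castAdd_natAdd,
    borderedMatrix_natAdd_castAdd, borderedMatrix_natAdd_natAdd, pathMatrix, borderVec, of_apply,
    Fin.ext_iff, Fin.val_castAdd, Fin.val_natAdd] <;>
  · have := i.isLt; have := j.isLt; split_ifs <;> first | (exfalso; omega) | ring

theorem cycleMatrix_succ {m : ℕ} (hm : 2 ≤ m) (a b : ℝ) :
    cycleMatrix (m + 1) a b = borderedMatrix (pathMatrix m) (borderVec m a b) 2 := by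
  ext i j
  refine Fin.addCases (fun i => ?_) (fun i => ?_) i <;>
  refine Fin.addCases (fun j => ?_) (fun j => ?_) j <;>
  simp only [borderedMatrix_castAdd_castAdd, borderedMatrix_castAdd_natAdd,
    borderedMatrix_natAdd_castAdd, borderedMatrix_natAdd_natAdd, cycleMatrix, pathMatrix,
    borderVec, of_apply, Fin.ext_iff, Fin.val_castAdd, Fin.val_natAdd, Nat.add_sub_cancel] <;>
  · have := i.isLt; have := j.isLt; split_ifs <;> first | (exfalso; omega) | ring

theorem pathMatrix_mulVec {m : ℕ} {f : ℕ → ℝ}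
    (hf : ∀ k, f k + 2 * f (k + 1) + f (k + 2) = 0) :
    pathMatrix m *ᵥ (fun i => f (i + 1)) = borderVec m (-f 0) (-f (m + 1)) := by
  ext ⟨i, hi⟩
  have hrow := Fin.sum_univ_eq_sum_range (fun j => ((if j = i then 2 else 0) +
    (if j = i + 1 then 1 else 0) + (if j + 1 = i then 1 else 0)) * f (j + 1)) m
  simp only [mulVec, dotProduct, pathMatrix_apply]
  rw [hrow]
  simp only [add_mul, ite_mul, zero_mul, one_mul, Finset.sum_add_distrib, Finset.sum_ite_eq',
    Finset.mem_range]
  rcases i with _ | i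
  · simp only [hi, ↓reduceIte, zero_add, Nat.reduceAdd, Nat.add_eq_zero_iff, one_ne_zero,
      and_false, Finset.sum_const_zero, add_zero, borderVec]
    split_ifs <;> first | (exfalso; omega) | (subst_vars; linarith [hf 0])
  · simp only [hi, ↓reduceIte, Nat.add_right_cancel_iff, Finset.sum_ite_eq', Finset.mem_range,
      borderVec, Nat.add_eq_zero_iff, one_ne_zero, and_false, zero_add]
    split_ifs <;> first | (exfalso; omega) | (subst_vars; linarith [hf (i + 1)])

theorem borderVec_dotProduct {m : ℕ} (hm : 1 ≤ m) (a b : ℝ) (f : ℕ → ℝ) :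
    borderVec m a b ⬝ᵥ (fun i => f (i + 1)) = a * f 1 + b * f m := by
  obtain ⟨k, rfl⟩ : ∃ k, m = k + 1 := ⟨m - 1, by omega⟩
  have hlast : ∀ i : Fin (k + 1), (i : ℕ) = k ↔ i = Fin.last k := fun i => by
    simp [Fin.ext_iff]
  simp [dotProduct, borderVec, add_mul, ite_mul, Finset.sum_add_distrib, Fin.val_eq_zero_iff,
    hlast]

theorem posDef_borderedMatrix_pathMatrix_iff {m : ℕ} (hm : 1 ≤ m) (hT : (pathMatrix m).PosDef)
    (a b : ℝ) :
    (borderedMatrix (pathMatrix m) (borderVec m a b) 2).PosDef ↔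
      m * (a ^ 2 + b ^ 2) - 2 * (-1) ^ m * a * b < 2 * (m + 1) := by
  have hs : ((-1 : ℝ) ^ m) ^ 2 = 1 := by rw [pow_right_comm, neg_one_sq, one_pow]
  -- The boundary values `-f 0 = a` and `-f (m + 1) = b` force `α = -a` and this `β`.
  set β := (a + (-1) ^ m * b) / (m + 1) with hβ
  let f : ℕ → ℝ := fun k => (-1) ^ k * (-a + β * k)
  have hf : ∀ k, f k + 2 * f (k + 1) + f (k + 2) = 0 := fun k => by
    simp only [f, pow_succ]; push_cast; ring
  have hw : pathMatrix m *ᵥ (fun i => f (i + 1)) = borderVec m a b := by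
    rw [pathMatrix_mulVec hf]
    congr 1
    · simp [f]
    · simp only [f, pow_succ, hβ]; push_cast; field_simp; linear_combination b * hs
  have hdot : a * f 1 + b * f m = (m * (a ^ 2 + b ^ 2) - 2 * (-1) ^ m * a * b) / (m + 1) := by
    simp only [f, pow_one, hβ]
    field_simp
    linear_combination m * b ^ 2 * hs
  rw [posDef_borderedMatrix_iff hT hw, borderVec_dotProduct hm, hdot, div_lt_iff₀ (by positivity)]

theorem pathMatrix_posDef : ∀ m, (pathMatrix m).PosDef
  | 0 => .of_dotProduct_mulVec_pos (by ext i; exact i.elim0)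
      fun x hx => (hx (Subsingleton.elim x 0)).elim
  | m + 1 => by
    rw [pathMatrix_succ]
    rcases Nat.eq_zero_or_pos m with rfl | hm
    · exact (posDef_borderedMatrix_iff (pathMatrix_posDef 0) (w := 0) (Subsingleton.elim _ _) 2).2
        (by simp)
    · refine (posDef_borderedMatrix_pathMatrix_iff hm (pathMatrix_posDef m) 0 1).2 ?_
      linarith

theorem cycleMatrix_posDef_iff {m : ℕ} (hm : 2 ≤ m) (a b : ℝ) :
    (cycleMatrix (m + 1) a b).PosDef ↔
      m * (a ^ 2 + b ^ 2) - 2 * (-1) ^ m * a * b < 2 * (m + 1) := by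
  rw [cycleMatrix_succ hm]
  exact posDef_borderedMatrix_pathMatrix_iff (by omega) (pathMatrix_posDef m) a b

/-- For every `n ≥ 3` one can choose `a`, `b` such that the cycle matrix `M_n` is
positive definite but loses positive definiteness when the corner entries are set
to zero. -/
theorem stmt_11 (n : ℕ) (hn : 3 ≤ n) :
    ∃ a b : ℝ, (cycleMatrix n a b).PosDef ∧ ¬ (cycleMatrix n 0 b).PosDef := by
  obtain ⟨m, rfl⟩ : ∃ m, n = m + 1 := ⟨n - 1, by omega⟩
  have hm : 2 ≤ m := by omega
  set b := √(2 * (m + 1) / m)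
  have hb : m * b ^ 2 = 2 * (m + 1) := by rw [Real.sq_sqrt (by positivity)]; field_simp
  have hs : ((-1 : ℝ) ^ m) ^ 2 = 1 := by rw [pow_right_comm, neg_one_sq, one_pow]
  refine ⟨(-1) ^ m * b / m, b, (cycleMatrix_posDef_iff hm _ _).2 ?_,
    (cycleMatrix_posDef_iff hm _ _).not.2 (by simp [hb])⟩
  have hval : m * (((-1) ^ m * b / m) ^ 2 + b ^ 2) - 2 * (-1) ^ m * ((-1) ^ m * b / m) * b =
      2 * (m + 1) * (m ^ 2 - 1) / m ^ 2 := by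
    field_simp
    linear_combination (-m * b ^ 2) * hs + (m ^ 2 - 1) * hb
  rw [hval, div_lt_iff₀ (by positivity)]
  nlinarith
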